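/- arXiv:1405.7481 — 2 statements merged into one kernel-verified Lean document; each statement's English description precedes it below -/
import Mathlib

section
/- (Plachky) Let A_1 ⊆ A_2 be algebras of subsets of a set Ω, let P be a finitely additive probability on A_1, and let Q be a finitely additive extension of P to A_2. Then Q is an extreme point of the convex set E(P, A_1, A_2) of all finitely additive extensions of P to A_2 if and only if for every ε > 0 and every A_2-measurable set B there exists an A_1-measurable set A with Q(B △ A) < ε. -/
open Filter Topology


/-- A path in `{0,1}^∞`. -/
abbrev BinSeq := ℕ → Bool

/-- The cylinder of length `t` with base `ω`: all sequences agreeing with `ω`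
in the first `t` coordinates. -/
def cyl {X : Type*} (ω : ℕ → X) (t : ℕ) : Set (ℕ → X) := {ω' | ∀ i < t, ω' i = ω i}

/-- An algebra of subsets of `Ω`. -/
structure SetAlgebra (Ω : Type*) where
  sets : Set (Set Ω)
  univ_mem : Set.univ ∈ sets
  compl_mem : ∀ S ∈ sets, Sᶜ ∈ sets
  union_mem : ∀ S ∈ sets, ∀ T ∈ sets, S ∪ T ∈ sets

/-- The algebra is a σ-algebra: closed under countable unions. -/
def SetAlgebra.IsSigmaAlgebra {Ω : Type*} (A : SetAlgebra Ω) : Prop :=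
  ∀ f : ℕ → Set Ω, (∀ n, f n ∈ A.sets) → (⋃ n, f n) ∈ A.sets

/-- The power-set algebra. -/
def SetAlgebra.top (Ω : Type*) : SetAlgebra Ω :=
  ⟨Set.univ, trivial, fun _ _ => trivial, fun _ _ _ _ => trivial⟩

/-- A finitely additive probability on `(Ω, A)`.  The function `m` is defined on all
subsets for convenience; only its values on `A.sets` are constrained. -/
structure FA {Ω : Type*} (A : SetAlgebra Ω) where
  m : Set Ω → ℝ
  nonneg : ∀ S ∈ A.sets, 0 ≤ m S
  total : m Set.univ = 1
  add : ∀ S ∈ A.sets, ∀ T ∈ A.sets, Disjoint S T → m (S ∪ T) = m S + m T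

/-- Conditional probability `P(E | C) = P(E ∩ C) / P(C)`. -/
noncomputable def FA.cond {Ω : Type*} {A : SetAlgebra Ω} (P : FA A) (E C : Set Ω) : ℝ :=
  P.m (E ∩ C) / P.m C

/-- `Q` is absolutely continuous w.r.t. `P` (written `Q ≪ P` in the paper):
for every sequence of events, `P(Eₙ) → 0` implies `Q(Eₙ) → 0`. -/
def AbsCont {Ω : Type*} {A : SetAlgebra Ω} (P Q : FA A) : Prop :=
  ∀ E : ℕ → Set Ω, (∀ n, E n ∈ A.sets) →
    Tendsto (fun n => P.m (E n)) atTop (𝓝 0) → Tendsto (fun n => Q.m (E n)) atTop (𝓝 0)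

/-- `P` merges with `Q`: for every `ε > 0`, the `Q`-probability of the set of paths where
some event has conditional probabilities (given the first `t` coordinates) differing by
more than `ε` tends to `0` as `t → ∞`.  (`sup_E |P(E|ωᵗ) - Q(E|ωᵗ)| > ε` is expressed
equivalently as `∃ E`.) -/
def Merges {A : SetAlgebra BinSeq} (P Q : FA A) : Prop :=
  ∀ ε > 0, Tendsto
    (fun t => Q.m {ω | ∃ E ∈ A.sets, ε < |P.cond E (cyl ω t) - Q.cond E (cyl ω t)|})
    atTop (𝓝 0)

/-- Membership in the algebra `F` generated by the cylinders of `{0,1}^∞`: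
the finite unions of cylinders (the empty union giving `∅`). -/
def InCylAlg (S : Set BinSeq) : Prop :=
  ∃ (n : ℕ) (f : Fin n → BinSeq × ℕ), S = ⋃ i, cyl (f i).1 (f i).2

/-- `Q` agrees with `P` on the algebra generated by cylinders, i.e. `Q` is an
extension of `P_F` from `F` to `Σ`. -/
def ExtAgree {A : SetAlgebra BinSeq} (P Q : FA A) : Prop :=
  ∀ S, InCylAlg S → Q.m S = P.m S

/-- `P` is an extreme point of the set `E(P_F, F, Σ)` of extensions of its restriction
to the cylinder algebra: any representation of `P` as a nontrivial convex combination
of two extensions forces the two extensions to coincide (with `P`). -/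
def ExtremePoint {A : SetAlgebra BinSeq} (P : FA A) : Prop :=
  ∀ Q R : FA A, ExtAgree P Q → ExtAgree P R →
    ∀ α : ℝ, 0 < α → α < 1 →
      (∀ S ∈ A.sets, P.m S = α * Q.m S + (1 - α) * R.m S) →
      ∀ S ∈ A.sets, Q.m S = R.m S

/-- `P` is strongly nonatomic (Savagean): every event can be split in any proportion. -/
def StronglyNonatomic {Ω : Type*} {A : SetAlgebra Ω} (P : FA A) : Prop :=
  ∀ E ∈ A.sets, ∀ α : ℝ, 0 ≤ α → α ≤ 1 → ∃ F ∈ A.sets, F ⊆ E ∧ P.m F = α * P.m E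

/-- The Blackwell–Dubins property: `P` merges with every `Q ≪ P`. -/
def BDProp {A : SetAlgebra BinSeq} (P : FA A) : Prop :=
  ∀ Q : FA A, AbsCont P Q → Merges P Q

/-!
If every `A₂`-set is `Q`-approximable by `A₁`-sets and `Q = α Q₁ + (1 - α) Q₂`, then `α Q₁ ≤ Q`,
so `Q₁(B ∆ S) ≤ Q(B ∆ S) / α`; as `Q₁` and `Q` agree on `A₁`, `|Q₁ B - Q B|` is at most
`Q₁(B ∆ S) + Q(B ∆ S)`, which can be made arbitrarily small.

Conversely, if `Q(B ∆ S) ≥ ε` for all `S ∈ A₁`, consider on simple functions the sublinear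
functional "`Q`-mean distance from the `A₁`-simple functions". It is `≥ ε / 2` at `1_B`
(compare `B` with a level set of any `A₁`-simple approximant), so Hahn–Banach gives a linear
`g ≤` it with `g 1_B = ε / 2`. Then `μ E = g 1_E` is finitely additive, vanishes on `A₁` and
satisfies `|μ| ≤ Q`, and `Q = ½ (Q + μ) + ½ (Q - μ)` splits `Q` inside the set of extensions.
-/

section

open Finsupp

variable {Ω : Type*}

namespace SetAlgebra

variable (A : SetAlgebra Ω) {S T : Set Ω}

theorem empty_mem : ∅ ∈ A.sets := by
  simpa using A.compl_mem _ A.univ_mem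

theorem inter_mem (hS : S ∈ A.sets) (hT : T ∈ A.sets) : S ∩ T ∈ A.sets := by
  simpa using A.compl_mem _ (A.union_mem _ (A.compl_mem _ hS) _ (A.compl_mem _ hT))

theorem diff_mem (hS : S ∈ A.sets) (hT : T ∈ A.sets) : S \ T ∈ A.sets :=
  A.inter_mem hS (A.compl_mem _ hT)

theorem symmDiff_mem (hS : S ∈ A.sets) (hT : T ∈ A.sets) : symmDiff S T ∈ A.sets :=
  A.union_mem _ (A.diff_mem hS hT) _ (A.diff_mem hT hS)

end SetAlgebra

namespace FA

variable {A : SetAlgebra Ω} (μ : FA A) {S T : Set Ω}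

theorem m_empty : μ.m ∅ = 0 := by
  simpa using μ.add ∅ A.empty_mem ∅ A.empty_mem disjoint_bot_left

theorem m_inter_add_diff (hS : S ∈ A.sets) (hT : T ∈ A.sets) :
    μ.m (S ∩ T) + μ.m (S \ T) = μ.m S := by
  rw [← μ.add _ (A.inter_mem hS hT) _ (A.diff_mem hS hT) Set.disjoint_sdiff_inter.symm,
    Set.inter_union_sdiff]

theorem abs_sub_le_m_symmDiff (hS : S ∈ A.sets) (hT : T ∈ A.sets) :
    |μ.m S - μ.m T| ≤ μ.m (symmDiff S T) := by
  have hST := μ.m_inter_add_diff hS hT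
  have hTS := μ.m_inter_add_diff hT hS
  have hsymm := μ.add _ (A.diff_mem hS hT) _ (A.diff_mem hT hS) disjoint_sdiff_sdiff
  rw [Set.inter_comm] at hTS
  rw [Set.symmDiff_def, hsymm, abs_le]
  constructor <;> linarith [μ.nonneg _ (A.diff_mem hS hT), μ.nonneg _ (A.diff_mem hT hS)]

end FA

noncomputable def sumIndicators : (Set Ω →₀ ℝ) →ₗ[ℝ] Ω → ℝ :=
  linearCombination ℝ fun E => E.indicator 1

theorem sumIndicators_single_add_apply (E : Set Ω) (c : ℝ) (w : Set Ω →₀ ℝ) (ω : Ω) :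
    sumIndicators (single E c + w) ω = c * E.indicator 1 ω + sumIndicators w ω := by
  simp [sumIndicators]

theorem mem_supported_of_single_add {α M R : Type*} [Semiring R] [AddCommMonoid M] [Module R M]
    {s : Set α} {a : α} {b : M} {w : α →₀ M} (ha : a ∉ w.support) (hb : b ≠ 0)
    (h : single a b + w ∈ supported M R s) : a ∈ s ∧ w ∈ supported M R s := by
  rw [mem_supported, support_single_add ha hb, Finset.coe_cons, Set.insert_subset_iff] at h
  exact ⟨h.1, (mem_supported R w).2 h.2⟩

namespace SetAlgebra

variable (A : SetAlgebra Ω)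

theorem setOf_lt_sumIndicators_mem {w : Set Ω →₀ ℝ} (hw : w ∈ supported ℝ ℝ A.sets) (a : ℝ) :
    {ω | a < sumIndicators w ω} ∈ A.sets := by
  induction w using Finsupp.induction generalizing a with
  | zero =>
    by_cases ha : a < 0
    · simpa [ha] using A.univ_mem
    · simpa [ha] using A.empty_mem
  | single_add E c w hE hc ih =>
    obtain ⟨hEA, hw⟩ := mem_supported_of_single_add hE hc hw
    have hsplit : {ω | a < sumIndicators (single E c + w) ω} =
        E ∩ {ω | a - c < sumIndicators w ω} ∪ {ω | a < sumIndicators w ω} \ E := by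
      ext ω
      by_cases hω : ω ∈ E <;> simp [sumIndicators_single_add_apply, hω, sub_lt_iff_lt_add']
    rw [hsplit]
    exact A.union_mem _ (A.inter_mem hEA (ih hw _)) _ (A.diff_mem (ih hw _) hEA)

end SetAlgebra

namespace FA

variable {A : SetAlgebra Ω} (μ : FA A)

noncomputable def integral : (Set Ω →₀ ℝ) →ₗ[ℝ] ℝ :=
  linearCombination ℝ μ.m

@[simp]
theorem integral_single (E : Set Ω) (c : ℝ) : μ.integral (single E c) = c * μ.m E :=
  linearCombination_single ℝ c E

/-- Relativised to `T ∈ A` so that the induction can split `T` along the newest set of the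
combination. -/
theorem mul_le_linearCombination_inter {w : Set Ω →₀ ℝ} (hw : w ∈ supported ℝ ℝ A.sets)
    {T : Set Ω} (hT : T ∈ A.sets) {a : ℝ} (ha : ∀ ω ∈ T, a ≤ sumIndicators w ω) :
    a * μ.m T ≤ linearCombination ℝ (fun E => μ.m (E ∩ T)) w := by
  induction w using Finsupp.induction generalizing T a with
  | zero =>
    rcases T.eq_empty_or_nonempty with rfl | ⟨ω, hω⟩
    · simp [μ.m_empty]
    · simpa using mul_nonpos_of_nonpos_of_nonneg (by simpa using ha ω hω) (μ.nonneg T hT)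
  | single_add E c w hE hc ih =>
    obtain ⟨hEA, hw⟩ := mem_supported_of_single_add hE hc hw
    have hin := ih hw (A.inter_mem hT hEA) (a := a - c) fun ω hω => by
      have := ha ω hω.1
      rw [sumIndicators_single_add_apply, Set.indicator_of_mem hω.2, Pi.one_apply,
        mul_one] at this
      linarith
    have hout := ih hw (A.diff_mem hT hEA) (a := a) fun ω hω => by
      have := ha ω hω.1
      rwa [sumIndicators_single_add_apply, Set.indicator_of_notMem hω.2, mul_zero,
        zero_add] at this
    have hsplit : linearCombination ℝ (fun F => μ.m (F ∩ T)) w =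
        linearCombination ℝ (fun F => μ.m (F ∩ (T ∩ E))) w +
          linearCombination ℝ (fun F => μ.m (F ∩ (T \ E))) w := by
      simp only [linearCombination_apply, ← Finsupp.sum_add, smul_eq_mul, ← mul_add]
      refine Finsupp.sum_congr fun F hF => ?_
      rw [← μ.m_inter_add_diff (A.inter_mem (hw hF) hT) hEA, Set.inter_assoc,
        Set.inter_sdiff_assoc]
    rw [map_add, linearCombination_single, hsplit, smul_eq_mul, Set.inter_comm E,
      ← μ.m_inter_add_diff hT hEA]
    linarith

theorem integral_nonneg {w : Set Ω →₀ ℝ} (hw : w ∈ supported ℝ ℝ A.sets)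
    (h : ∀ ω, 0 ≤ sumIndicators w ω) : 0 ≤ μ.integral w := by
  simpa [integral] using μ.mul_le_linearCombination_inter hw A.univ_mem fun ω _ => h ω

end FA

section DistanceToSimpleFunctions

variable {A₂ : SetAlgebra Ω} (A₁ : SetAlgebra Ω) (Q : FA A₂)

/-- Upper `Q`-integrals of `|x - v|`, `v` ranging over `A₁`-simple functions, computed with
`A₂`-simple majorants. -/
def distBounds (x : Ω → ℝ) : Set ℝ :=
  {r | ∃ u ∈ supported ℝ ℝ A₁.sets, ∃ s ∈ supported ℝ ℝ A₂.sets,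
    (∀ ω, |x ω - sumIndicators u ω| ≤ sumIndicators s ω) ∧ Q.integral s = r}

noncomputable def simpleDist (x : Ω → ℝ) : ℝ :=
  sInf (distBounds A₁ Q x)

variable {A₁ Q} {x y : Ω → ℝ} {r r' : ℝ}

theorem nonneg_of_mem_distBounds (hr : r ∈ distBounds A₁ Q x) : 0 ≤ r := by
  obtain ⟨u, -, s, hs, hle, rfl⟩ := hr
  exact Q.integral_nonneg hs fun ω => (abs_nonneg _).trans (hle ω)

theorem simpleDist_nonneg (x : Ω → ℝ) : 0 ≤ simpleDist A₁ Q x :=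
  Real.sInf_nonneg fun _ => nonneg_of_mem_distBounds

theorem simpleDist_le (hr : r ∈ distBounds A₁ Q x) : simpleDist A₁ Q x ≤ r :=
  csInf_le ⟨0, fun _ => nonneg_of_mem_distBounds⟩ hr

theorem mul_mem_distBounds {c : ℝ} (hc : 0 ≤ c) (hr : r ∈ distBounds A₁ Q x) :
    c * r ∈ distBounds A₁ Q (c • x) := by
  obtain ⟨u, hu, s, hs, hle, rfl⟩ := hr
  refine ⟨c • u, Submodule.smul_mem _ c hu, c • s, Submodule.smul_mem _ c hs, fun ω => ?_,
    by simp⟩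
  simpa [← mul_sub, abs_mul, abs_of_nonneg hc] using mul_le_mul_of_nonneg_left (hle ω) hc

theorem add_mem_distBounds (hr : r ∈ distBounds A₁ Q x) (hr' : r' ∈ distBounds A₁ Q y) :
    r + r' ∈ distBounds A₁ Q (x + y) := by
  obtain ⟨u, hu, s, hs, hle, rfl⟩ := hr
  obtain ⟨u', hu', s', hs', hle', rfl⟩ := hr'
  refine ⟨u + u', add_mem hu hu', s + s', add_mem hs hs', fun ω => ?_, map_add _ _ _⟩
  calc |(x + y) ω - sumIndicators (u + u') ω|
      = |(x ω - sumIndicators u ω) + (y ω - sumIndicators u' ω)| := by simp; ring_nf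
    _ ≤ |x ω - sumIndicators u ω| + |y ω - sumIndicators u' ω| := abs_add_le _ _
    _ ≤ sumIndicators (s + s') ω := by simpa using add_le_add (hle ω) (hle' ω)

open scoped Pointwise in
theorem distBounds_smul {c : ℝ} (hc : 0 < c) (x : Ω → ℝ) :
    distBounds A₁ Q (c • x) = c • distBounds A₁ Q x := by
  ext r
  refine ⟨fun hr => ⟨c⁻¹ * r, ?_, by simp [hc.ne']⟩, ?_⟩
  · simpa [smul_smul, hc.ne'] using mul_mem_distBounds (inv_nonneg.2 hc.le) hr
  · rintro ⟨r, hr, rfl⟩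
    exact mul_mem_distBounds hc.le hr

theorem simpleDist_smul {c : ℝ} (hc : 0 < c) (x : Ω → ℝ) :
    simpleDist A₁ Q (c • x) = c * simpleDist A₁ Q x := by
  rw [simpleDist, distBounds_smul hc, Real.sInf_smul_of_nonneg hc.le, smul_eq_mul, simpleDist]

theorem simpleDist_add_le (hx : (distBounds A₁ Q x).Nonempty)
    (hy : (distBounds A₁ Q y).Nonempty) :
    simpleDist A₁ Q (x + y) ≤ simpleDist A₁ Q x + simpleDist A₁ Q y := by
  have h : ∀ r ∈ distBounds A₁ Q x, simpleDist A₁ Q (x + y) - r ≤ simpleDist A₁ Q y :=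
    fun r hr => le_csInf hy fun r' hr' => by
      linarith [simpleDist_le (add_mem_distBounds hr hr')]
  have : simpleDist A₁ Q (x + y) - simpleDist A₁ Q y ≤ simpleDist A₁ Q x :=
    le_csInf hx fun r hr => by linarith [h r hr]
  linarith

theorem m_mem_distBounds {E : Set Ω} (hE : E ∈ A₂.sets) (hx : ∀ ω, |x ω| ≤ E.indicator 1 ω) :
    Q.m E ∈ distBounds A₁ Q x :=
  ⟨0, zero_mem _, single E 1, single_mem_supported ℝ _ hE, by simpa [sumIndicators] using hx,
    by simp⟩

theorem zero_mem_distBounds {u : Set Ω →₀ ℝ} (hu : u ∈ supported ℝ ℝ A₁.sets) :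
    0 ∈ distBounds A₁ Q (sumIndicators u) :=
  ⟨u, hu, 0, zero_mem _, by simp, map_zero _⟩

theorem distBounds_sumIndicators_nonempty (w : Set Ω →₀ ℝ) :
    (distBounds A₁ Q (sumIndicators w)).Nonempty := by
  induction w using Finsupp.induction_linear with
  | zero => exact ⟨0, zero_mem_distBounds (zero_mem _)⟩
  | add w w' hw hw' =>
    obtain ⟨r, hr⟩ := hw
    obtain ⟨r', hr'⟩ := hw'
    exact ⟨r + r', by simpa using add_mem_distBounds hr hr'⟩
  | single E c =>
    refine ⟨|c|, 0, zero_mem _, single Set.univ |c|, single_mem_supported ℝ _ A₂.univ_mem,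
      fun ω => ?_, by simp [Q.total]⟩
    by_cases hω : ω ∈ E <;> simp [sumIndicators, hω]

theorem half_le_of_mem_distBounds_indicator (hsub : A₁.sets ⊆ A₂.sets) {B : Set Ω}
    (hB : B ∈ A₂.sets) {ε : ℝ} (hfar : ∀ S ∈ A₁.sets, ε ≤ Q.m (symmDiff B S))
    (hr : r ∈ distBounds A₁ Q (B.indicator 1)) : ε / 2 ≤ r := by
  obtain ⟨u, hu, s, hs, hle, rfl⟩ := hr
  -- on `B ∆ S` the approximant `v = sumIndicators u` is at distance `≥ 1/2` from `1_B`
  set S := {ω | 1 / 2 < sumIndicators u ω}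
  have hS : S ∈ A₁.sets := A₁.setOf_lt_sumIndicators_mem hu _
  have hBS : symmDiff B S ∈ A₂.sets := A₂.symmDiff_mem hB (hsub hS)
  have hmajorant : ∀ ω, 0 ≤ sumIndicators (s - single (symmDiff B S) (1 / 2)) ω := by
    intro ω
    have hs0 := (abs_nonneg _).trans (hle ω)
    have := abs_le.1 (hle ω)
    by_cases hωB : ω ∈ B <;> by_cases hωS : ω ∈ S <;>
      simp_all [S, sumIndicators, Set.mem_symmDiff] <;> linarith
  have key := Q.integral_nonneg (sub_mem hs (single_mem_supported ℝ _ hBS)) hmajorant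
  rw [map_sub, FA.integral_single, sub_nonneg] at key
  linarith [hfar S hS]

end DistanceToSimpleFunctions

variable (Ω) in
noncomputable def simpleFunctions : Submodule ℝ (Ω → ℝ) :=
  LinearMap.range (sumIndicators (Ω := Ω))

noncomputable def indicatorSimple (E : Set Ω) : simpleFunctions Ω :=
  ⟨sumIndicators (single E 1), single E 1, rfl⟩

theorem coe_indicatorSimple (E : Set Ω) : (indicatorSimple E : Ω → ℝ) = E.indicator 1 := by
  simp [indicatorSimple, sumIndicators]

theorem indicatorSimple_union {E F : Set Ω} (h : Disjoint E F) :
    indicatorSimple (E ∪ F) = indicatorSimple E + indicatorSimple F := by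
  refine Subtype.ext ?_
  rw [Submodule.coe_add, coe_indicatorSimple, coe_indicatorSimple, coe_indicatorSimple,
    Set.indicator_union_of_disjoint h]
  rfl

theorem abs_indicatorSimple_le (E : Set Ω) (ω : Ω) :
    |(indicatorSimple E : Ω → ℝ) ω| ≤ E.indicator 1 ω := by
  by_cases hω : ω ∈ E <;> simp [coe_indicatorSimple, hω]

section HahnBanach

variable {A₁ A₂ : SetAlgebra Ω} {Q : FA A₂}

theorem distBounds_nonempty (x : simpleFunctions Ω) : (distBounds A₁ Q x).Nonempty := by
  obtain ⟨_, w, rfl⟩ := x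
  exact distBounds_sumIndicators_nonempty w

/-- `simpleDist` is sublinear only where its bound sets are nonempty (`sInf ∅ = 0`), hence
Hahn–Banach is applied on the simple functions. -/
theorem exists_linear_le_simpleDist (hsub : A₁.sets ⊆ A₂.sets) {B : Set Ω} (hB : B ∈ A₂.sets)
    {ε : ℝ} (hε : 0 < ε) (hfar : ∀ S ∈ A₁.sets, ε ≤ Q.m (symmDiff B S)) :
    ∃ g : simpleFunctions Ω →ₗ[ℝ] ℝ,
      g (indicatorSimple B) = ε / 2 ∧ ∀ x, g x ≤ simpleDist A₁ Q x := by
  have hB0 : indicatorSimple B ≠ 0 := by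
    obtain ⟨ω, hω⟩ : B.Nonempty := Set.nonempty_iff_ne_empty.2 fun h => by
      simpa [h, Q.m_empty, hε.not_ge] using hfar ∅ A₁.empty_mem
    intro h
    have := congr_fun (congr_arg Subtype.val h) ω
    rw [coe_indicatorSimple] at this
    simp [hω] at this
  let f : simpleFunctions Ω →ₗ.[ℝ] ℝ := LinearPMap.mkSpanSingleton (indicatorSimple B) (ε / 2) hB0
  have hf : ∀ x : f.domain, f x ≤ simpleDist A₁ Q x := by
    rintro ⟨x, hx⟩
    obtain ⟨c, rfl⟩ := Submodule.mem_span_singleton.1 hx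
    rw [LinearPMap.mkSpanSingleton'_apply, smul_eq_mul]
    rcases le_or_gt c 0 with hc | hc
    · exact (mul_nonpos_of_nonpos_of_nonneg hc (by positivity)).trans (simpleDist_nonneg _)
    · show c * (ε / 2) ≤ simpleDist A₁ Q (c • (indicatorSimple B : Ω → ℝ))
      rw [simpleDist_smul hc]
      refine mul_le_mul_of_nonneg_left (le_csInf (distBounds_nonempty _) fun r hr => ?_) hc.le
      exact half_le_of_mem_distBounds_indicator hsub hB hfar (coe_indicatorSimple B ▸ hr)
  obtain ⟨g, hgB, hg⟩ := exists_extension_of_le_sublinear f (fun x => simpleDist A₁ Q x)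
    (fun c hc x => simpleDist_smul hc (x : Ω → ℝ))
    (fun x y => simpleDist_add_le (distBounds_nonempty x) (distBounds_nonempty y)) hf
  exact ⟨g, (hgB ⟨_, Submodule.mem_span_singleton_self _⟩).trans
    (LinearPMap.mkSpanSingleton'_apply_self _ _ _ _), hg⟩

theorem exists_signed_perturbation (hsub : A₁.sets ⊆ A₂.sets) {B : Set Ω} (hB : B ∈ A₂.sets)
    {ε : ℝ} (hε : 0 < ε) (hfar : ∀ S ∈ A₁.sets, ε ≤ Q.m (symmDiff B S)) :
    ∃ μ : Set Ω → ℝ, (∀ E F, Disjoint E F → μ (E ∪ F) = μ E + μ F) ∧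
      (∀ E ∈ A₂.sets, |μ E| ≤ Q.m E) ∧ (∀ S ∈ A₁.sets, μ S = 0) ∧ μ B = ε / 2 := by
  obtain ⟨g, hgB, hg⟩ := exists_linear_le_simpleDist hsub hB hε hfar
  have hgle (x : simpleFunctions Ω) (r : ℝ) (hr : r ∈ distBounds A₁ Q x) : g x ≤ r :=
    (hg x).trans (simpleDist_le hr)
  refine ⟨fun E => g (indicatorSimple E), fun E F hEF => ?_, fun E hE => abs_le.2 ⟨?_, ?_⟩,
    fun S hS => le_antisymm ?_ ?_, hgB⟩
  · simp only [indicatorSimple_union hEF, map_add]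
  · have := hgle (-indicatorSimple E) _
      (m_mem_distBounds hE fun ω => by simpa using abs_indicatorSimple_le E ω)
    rw [map_neg] at this
    linarith
  · exact hgle _ _ (m_mem_distBounds hE (abs_indicatorSimple_le E))
  · exact hgle _ 0 (zero_mem_distBounds (single_mem_supported ℝ _ hS))
  · have := hgle (-indicatorSimple S) 0 (by
      simpa [indicatorSimple] using
        zero_mem_distBounds (Q := Q) (neg_mem (single_mem_supported ℝ (1 : ℝ) hS)))
    rw [map_neg] at this
    linarith

end HahnBanach

namespace FA

variable {A : SetAlgebra Ω}

def perturb (Q : FA A) (μ : Set Ω → ℝ) (hadd : ∀ E F, Disjoint E F → μ (E ∪ F) = μ E + μ F)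
    (hle : ∀ E ∈ A.sets, |μ E| ≤ Q.m E) (huniv : μ Set.univ = 0) (t : ℝ) (ht : |t| ≤ 1) :
    FA A where
  m E := Q.m E + t * μ E
  nonneg E hE := by
    have : |t * μ E| ≤ Q.m E := by
      rw [abs_mul]
      exact (mul_le_of_le_one_left (abs_nonneg _) ht).trans (hle E hE)
    linarith [neg_abs_le (t * μ E)]
  total := by simp [Q.total, huniv]
  add S hS T hT h := by simp only [Q.add S hS T hT h, hadd S T h]; ring

theorem eq_of_mul_le_of_approx {A₁ A₂ : SetAlgebra Ω} (hsub : A₁.sets ⊆ A₂.sets)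
    {Q R : FA A₂}
    (happrox : ∀ ε > (0 : ℝ), ∀ B ∈ A₂.sets, ∃ S ∈ A₁.sets, Q.m (symmDiff B S) < ε)
    (hRQ : ∀ S ∈ A₁.sets, R.m S = Q.m S) {β : ℝ} (hβ : 0 < β)
    (hdom : ∀ E ∈ A₂.sets, β * R.m E ≤ Q.m E) {B : Set Ω} (hB : B ∈ A₂.sets) :
    R.m B = Q.m B := by
  refine eq_of_forall_dist_le fun ε hε => ?_
  obtain ⟨S, hS, hQS⟩ := happrox (ε / (β⁻¹ + 1)) (by positivity) B hB
  have hBS := A₂.symmDiff_mem hB (hsub hS)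
  have hRS : R.m (symmDiff B S) ≤ β⁻¹ * Q.m (symmDiff B S) :=
    (le_inv_mul_iff₀ hβ).2 (hdom _ hBS)
  rw [lt_div_iff₀ (by positivity)] at hQS
  calc dist (R.m B) (Q.m B) = |(R.m B - R.m S) - (Q.m B - Q.m S)| := by
        rw [Real.dist_eq, hRQ S hS]; ring_nf
    _ ≤ |R.m B - R.m S| + |Q.m B - Q.m S| := abs_sub _ _
    _ ≤ R.m (symmDiff B S) + Q.m (symmDiff B S) :=
        add_le_add (R.abs_sub_le_m_symmDiff hB (hsub hS))
          (Q.abs_sub_le_m_symmDiff hB (hsub hS))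
    _ ≤ ε := by linarith

end FA

end

/-- Plachky's theorem: an extension `Q` of `P` from `A₁` to `A₂` is an
extreme point of the set of all such extensions iff every `A₂`-set can be approximated
in `Q`-measure by `A₁`-sets. -/
theorem plachky {Ω : Type*} (A₁ A₂ : SetAlgebra Ω) (hsub : A₁.sets ⊆ A₂.sets)
    (P : FA A₁) (Q : FA A₂) (hQP : ∀ S ∈ A₁.sets, Q.m S = P.m S) :
    (∀ Q₁ Q₂ : FA A₂,
        (∀ S ∈ A₁.sets, Q₁.m S = P.m S) → (∀ S ∈ A₁.sets, Q₂.m S = P.m S) →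
        ∀ α : ℝ, 0 < α → α < 1 →
          (∀ B ∈ A₂.sets, Q.m B = α * Q₁.m B + (1 - α) * Q₂.m B) →
          ∀ B ∈ A₂.sets, Q₁.m B = Q.m B ∧ Q₂.m B = Q.m B)
    ↔ (∀ ε > (0:ℝ), ∀ B ∈ A₂.sets, ∃ S ∈ A₁.sets, Q.m (symmDiff B S) < ε) := by
  constructor
  · intro hext
    by_contra! hfar
    obtain ⟨ε, hε, B, hB, hfar⟩ := hfar
    obtain ⟨μ, hadd, hle, hvanish, hμB⟩ := exists_signed_perturbation hsub hB hε hfar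
    let Q' (t : ℝ) (ht : |t| ≤ 1) : FA A₂ :=
      Q.perturb μ hadd hle (hvanish _ A₁.univ_mem) t ht
    have hQ'P (t : ℝ) (ht : |t| ≤ 1) : ∀ S ∈ A₁.sets, (Q' t ht).m S = P.m S := fun S hS => by
      simp [Q', FA.perturb, hvanish S hS, hQP S hS]
    have := (hext (Q' 1 (by simp)) (Q' (-1) (by simp)) (hQ'P _ _) (hQ'P _ _) (1 / 2)
      (by norm_num) (by norm_num) (fun E _ => by simp [Q', FA.perturb]; ring) B hB).1
    simp [Q', FA.perturb, hμB] at this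
    linarith
  · intro happrox Q₁ Q₂ hQ₁ hQ₂ α hα0 hα1 hconv B hB
    have hagree (R : FA A₂) (hR : ∀ S ∈ A₁.sets, R.m S = P.m S) :
        ∀ S ∈ A₁.sets, R.m S = Q.m S := fun S hS => (hR S hS).trans (hQP S hS).symm
    refine ⟨FA.eq_of_mul_le_of_approx hsub happrox (hagree Q₁ hQ₁) hα0 (fun E hE => ?_) hB,
      FA.eq_of_mul_le_of_approx hsub happrox (hagree Q₂ hQ₂) (sub_pos.2 hα1)
        (fun E hE => ?_) hB⟩
    · nlinarith [hconv E hE, Q₂.nonneg E hE]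
    · nlinarith [hconv E hE, Q₁.nonneg E hE]
end

section
/- Let Ω = {0,1}^∞, let F be the algebra generated by cylinders, and let P, Q be finitely additive probabilities on (Ω, Σ). If the restriction Q_F is absolutely continuous with respect to P_F (meaning P(F_n) → 0 implies Q(F_n) → 0 for sequences F_n ∈ F), then the σ-additive Carathéodory extensions Q_σ and P_σ of Q_F and P_F to the Borel σ-algebra satisfy Q_σ ≪ P_σ. -/
open Filter Topology


/-!
Since `P ≥ 0` on the cylinder algebra, the sequential condition `Q_F ≪ P_F` yields an `ε`-`δ`
bound there: `P S < δ → Q S ≤ ε`. The cylinder algebra generates the product σ-algebra, so every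
Borel set `s` is approximated in `(P_σ + Q_σ)`-measure by sets `t` of the algebra. If
`P_σ s = 0`, then `P_σ t < δ`, hence `Q_σ t = Q t ≤ ε`, and `Q_σ s ≤ Q_σ t + Q_σ (s ∆ t) ≤ 2ε`.
-/

open MeasureTheory MeasurableSpace Set
open scoped symmDiff

theorem SetAlgebra.isSetAlgebra {Ω : Type*} (A : SetAlgebra Ω) : IsSetAlgebra A.sets where
  empty_mem := by simpa using A.compl_mem _ A.univ_mem
  compl_mem := A.compl_mem
  union_mem _ _ hS hT := A.union_mem _ hS _ hT

theorem InCylAlg.mem_sets {A : SetAlgebra BinSeq} (hcyl : ∀ ω t, cyl ω t ∈ A.sets)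
    {S : Set BinSeq} (hS : InCylAlg S) : S ∈ A.sets := by
  obtain ⟨n, f, rfl⟩ := hS
  simpa using A.isSetAlgebra.biUnion_mem Finset.univ fun i _ => hcyl (f i).1 (f i).2

theorem inCylAlg_iUnion {ι : Type*} [Finite ι] (f : ι → BinSeq × ℕ) :
    InCylAlg (⋃ i, cyl (f i).1 (f i).2) := by
  obtain ⟨n, ⟨e⟩⟩ := Finite.exists_equiv_fin ι
  exact ⟨n, f ∘ e.symm, (e.symm.surjective.iUnion_comp _).symm⟩

def padFalse {t : ℕ} (v : Fin t → Bool) : BinSeq := fun i => if h : i < t then v ⟨i, h⟩ else false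

def DeterminedBy (t : ℕ) (S : Set BinSeq) : Prop :=
  ∀ ω ∈ S, ∀ ω' ∈ cyl ω t, ω' ∈ S

theorem DeterminedBy.mono {s t : ℕ} {S : Set BinSeq} (hS : DeterminedBy s S) (hst : s ≤ t) :
    DeterminedBy t S :=
  fun ω hω ω' hω' => hS ω hω ω' fun i hi => hω' i (hi.trans_le hst)

theorem determinedBy_cyl (ω : BinSeq) (t : ℕ) : DeterminedBy t (cyl ω t) :=
  fun _ h₁ _ h₂ i hi => (h₂ i hi).trans (h₁ i hi)

theorem DeterminedBy.eq_iUnion_cyl {t : ℕ} {S : Set BinSeq} (hS : DeterminedBy t S) :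
    S = ⋃ v : {v : Fin t → Bool // padFalse v ∈ S}, cyl (padFalse v.1) t := by
  ext ω
  simp only [mem_iUnion]
  constructor
  · intro hω
    have hagree : ω ∈ cyl (padFalse fun i : Fin t => ω i) t := fun i hi => by simp [padFalse, hi]
    exact ⟨⟨fun i => ω i, hS ω hω _ fun i hi => (hagree i hi).symm⟩, hagree⟩
  · rintro ⟨v, hω⟩
    exact hS _ v.2 ω hω

theorem inCylAlg_iff_exists_determinedBy {S : Set BinSeq} :
    InCylAlg S ↔ ∃ t, DeterminedBy t S := by
  constructor
  · rintro ⟨n, f, rfl⟩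
    refine ⟨Finset.univ.sup fun i => (f i).2, ?_⟩
    intro ω hω ω' hω'
    obtain ⟨i, hi⟩ := mem_iUnion.1 hω
    exact mem_iUnion.2
      ⟨i, (determinedBy_cyl _ _).mono (Finset.le_sup (Finset.mem_univ i)) ω hi ω' hω'⟩
  · rintro ⟨t, ht⟩
    rw [ht.eq_iUnion_cyl]
    exact inCylAlg_iUnion fun v => (_, t)

theorem isSetAlgebra_inCylAlg : IsSetAlgebra {S : Set BinSeq | InCylAlg S} where
  empty_mem := inCylAlg_iff_exists_determinedBy.2 ⟨0, fun _ h => h.elim⟩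
  compl_mem S hS := by
    obtain ⟨t, ht⟩ := inCylAlg_iff_exists_determinedBy.1 hS
    exact inCylAlg_iff_exists_determinedBy.2
      ⟨t, fun ω hω ω' hω' hω'S => hω (ht ω' hω'S ω fun i hi => (hω' i hi).symm)⟩
  union_mem S T hS hT := by
    obtain ⟨s, hs⟩ := inCylAlg_iff_exists_determinedBy.1 hS
    obtain ⟨t, ht⟩ := inCylAlg_iff_exists_determinedBy.1 hT
    refine inCylAlg_iff_exists_determinedBy.2 ⟨max s t, ?_⟩
    rintro ω (hω | hω) ω' hω'
    · exact Or.inl ((hs.mono (le_max_left s t)) ω hω ω' hω')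
    · exact Or.inr ((ht.mono (le_max_right s t)) ω hω ω' hω')

theorem measurableSet_cyl (ω : BinSeq) (t : ℕ) : MeasurableSet (cyl ω t) := by
  have : cyl ω t = (Iio t).pi fun i => {ω i} := by ext; simp [cyl]
  rw [this]
  exact .pi (to_countable _) fun _ _ => measurableSet_singleton _

theorem measurableSpace_eq_generateFrom_inCylAlg :
    (inferInstance : MeasurableSpace BinSeq) = generateFrom {S | InCylAlg S} := by
  refine le_antisymm ?_ (generateFrom_le ?_)
  · refine iSup_le fun i => measurable_iff_comap_le.1 fun s _ => measurableSet_generateFrom ?_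
    refine inCylAlg_iff_exists_determinedBy.2 ⟨i + 1, fun ω hω ω' hω' => ?_⟩
    simpa [hω' i i.lt_succ_self] using hω
  · rintro S ⟨n, f, rfl⟩
    exact .iUnion fun i => measurableSet_cyl _ _

theorem exists_pos_forall_le_of_tendsto_imp_tendsto {β : Type*} {C : β → Prop} {p q : β → ℝ}
    (hp : ∀ b, C b → 0 ≤ p b)
    (hpq : ∀ F : ℕ → β, (∀ n, C (F n)) →
      Tendsto (fun n => p (F n)) atTop (𝓝 0) → Tendsto (fun n => q (F n)) atTop (𝓝 0))
    {ε : ℝ} (hε : 0 < ε) : ∃ δ > 0, ∀ b, C b → p b < δ → q b ≤ ε := by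
  by_contra! h
  choose F hFC hFp hFq using fun n : ℕ => h (1 / (n + 1)) Nat.one_div_pos_of_nat
  have hp0 : Tendsto (fun n => p (F n)) atTop (𝓝 0) :=
    squeeze_zero (fun n => hp _ (hFC n)) (fun n => (hFp n).le)
      tendsto_one_div_add_atTop_nhds_zero_nat
  have : ε ≤ 0 := ge_of_tendsto' (hpq F hFC hp0) fun n => (hFq n).le
  linarith

theorem MeasureTheory.Measure.absolutelyContinuous_of_isSetAlgebra
    {α : Type*} [m : MeasurableSpace α] {𝒜 : Set (Set α)}
    (h𝒜 : IsSetAlgebra 𝒜) (hgen : m = generateFrom 𝒜)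
    {μ ν : Measure α} [IsFiniteMeasure μ] [IsFiniteMeasure ν]
    (h : ∀ ε > 0, ∃ δ > 0, ∀ t ∈ 𝒜, μ t < ENNReal.ofReal δ → ν t ≤ ENNReal.ofReal ε) :
    ν ≪ μ := by
  refine .mk fun s hs hμs => le_antisymm (ENNReal.le_of_forall_pos_le_add fun ε hε _ => ?_) bot_le
  obtain ⟨δ, hδ, hδν⟩ := h (ε / 2) (by positivity)
  obtain ⟨t, ht, hst⟩ := (Measure.MeasureDense.of_generateFrom_isSetAlgebra_finite (μ + ν) h𝒜
    hgen).approx s hs (measure_ne_top _ s) (min δ (ε / 2)) (by positivity)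
  have hμst : μ (t ∆ s) < ENNReal.ofReal δ := by
    rw [symmDiff_comm]
    calc μ (s ∆ t) ≤ (μ + ν) (s ∆ t) := Measure.le_add_right le_rfl _
      _ < ENNReal.ofReal (min δ (ε / 2)) := hst
      _ ≤ ENNReal.ofReal δ := ENNReal.ofReal_le_ofReal (min_le_left _ _)
  have hνst : ν (s ∆ t) ≤ ENNReal.ofReal (ε / 2) :=
    calc ν (s ∆ t) ≤ (μ + ν) (s ∆ t) := Measure.le_add_left le_rfl _
      _ ≤ ENNReal.ofReal (min δ (ε / 2)) := hst.le
      _ ≤ ENNReal.ofReal (ε / 2) := ENNReal.ofReal_le_ofReal (min_le_right _ _)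
  have hμt : μ t < ENNReal.ofReal δ :=
    calc μ t ≤ μ s + μ (t ∆ s) := tsub_le_iff_left.1 le_measure_symmDiff
      _ < ENNReal.ofReal δ := by rwa [hμs, zero_add]
  calc ν s ≤ ν t + ν (s ∆ t) := tsub_le_iff_left.1 le_measure_symmDiff
    _ ≤ ENNReal.ofReal (ε / 2) + ENNReal.ofReal (ε / 2) := add_le_add (hδν t ht hμt) hνst
    _ = 0 + ε := by rw [← ENNReal.ofReal_add (by positivity) (by positivity)]; simp

open MeasureTheory in
theorem absCont_of_restrictions_absCont_general
    (A : SetAlgebra BinSeq)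
    (hcyl : ∀ (ω : BinSeq) (t : ℕ), cyl ω t ∈ A.sets)
    (P Q : FA A)
    (Pσ Qσ : Measure BinSeq) [IsProbabilityMeasure Pσ] [IsProbabilityMeasure Qσ]
    (hPσ : ∀ S, InCylAlg S → Pσ S = ENNReal.ofReal (P.m S))
    (hQσ : ∀ S, InCylAlg S → Qσ S = ENNReal.ofReal (Q.m S))
    (hac : ∀ F : ℕ → Set BinSeq, (∀ n, InCylAlg (F n)) →
      Tendsto (fun n => P.m (F n)) atTop (𝓝 0) →
      Tendsto (fun n => Q.m (F n)) atTop (𝓝 0)) :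
    Qσ ≪ Pσ := by
  refine Measure.absolutelyContinuous_of_isSetAlgebra isSetAlgebra_inCylAlg
    measurableSpace_eq_generateFrom_inCylAlg fun ε hε => ?_
  obtain ⟨δ, hδ, hPQ⟩ := exists_pos_forall_le_of_tendsto_imp_tendsto
    (fun S hS => P.nonneg S (hS.mem_sets hcyl)) hac hε
  refine ⟨δ, hδ, fun S hS hPS => ?_⟩
  rw [hPσ S hS, ENNReal.ofReal_lt_ofReal_iff hδ] at hPS
  rw [hQσ S hS]
  exact ENNReal.ofReal_le_ofReal (hPQ S hS hPS)

open MeasureTheory in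
/-- Lemma 1: if `Q_F ≪ P_F` on the cylinder algebra, then the σ-additive
(Carathéodory) extensions of the restrictions to the Borel σ-algebra satisfy
`Q_σ ≪ P_σ`.  The extensions are characterized as the σ-additive probability measures
agreeing with `P` (resp. `Q`) on the cylinder algebra. -/
theorem absCont_of_restrictions_absCont
    (A : SetAlgebra BinSeq) (hσ : A.IsSigmaAlgebra)
    (hcyl : ∀ (ω : BinSeq) (t : ℕ), cyl ω t ∈ A.sets)
    (P Q : FA A)
    (Pσ Qσ : Measure BinSeq) [IsProbabilityMeasure Pσ] [IsProbabilityMeasure Qσ]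
    (hPσ : ∀ S, InCylAlg S → Pσ S = ENNReal.ofReal (P.m S))
    (hQσ : ∀ S, InCylAlg S → Qσ S = ENNReal.ofReal (Q.m S))
    (hac : ∀ F : ℕ → Set BinSeq, (∀ n, InCylAlg (F n)) →
      Tendsto (fun n => P.m (F n)) atTop (𝓝 0) →
      Tendsto (fun n => Q.m (F n)) atTop (𝓝 0)) :
    Qσ ≪ Pσ :=
  absCont_of_restrictions_absCont_general A hcyl P Q Pσ Qσ hPσ hQσ hac
end
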